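/- Var[G̃_ij] ≥ (K_ii·K_jj + K_ij²) / (D·p̄_ij), where p̄_ij = (1/D)·Σ_{s=1}^D p_{is}·p_{js}. (Proposition 2, lower bound on the variance of the bias-corrected off-diagonal Gram entry.) -/

import Mathlib

open MeasureTheory ProbabilityTheory Filter Finset

/-- The centered bivariate Gaussian law with covariance matrix `[[a, c], [c, b]]`,
characterized through the Cramér–Wold device. -/
def IsCenteredGaussianPair (ν : Measure (ℝ × ℝ)) (a b c : ℝ) : Prop :=
  IsProbabilityMeasure ν ∧
    ∀ t u : ℝ, ν.map (fun p => t * p.1 + u * p.2) =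
      gaussianReal 0 (Real.toNNReal (t ^ 2 * a + 2 * t * u * c + u ^ 2 * b))

/-- Codomain family for the joint family of the two indicator families (real-valued)
and the family of Gaussian pairs. -/
abbrev mixedCod (α β γ : Type*) : α ⊕ β ⊕ γ → Type _ :=
  Sum.elim (fun _ => ℝ) (Sum.elim (fun _ => ℝ) fun _ => ℝ × ℝ)

/-- The measurable-space structures on the codomains. -/
def mixedMS {α β γ : Type*} : ∀ x : α ⊕ β ⊕ γ, MeasurableSpace (mixedCod α β γ x)
  | Sum.inl _ => (inferInstance : MeasurableSpace ℝ)
  | Sum.inr (Sum.inl _) => (inferInstance : MeasurableSpace ℝ)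
  | Sum.inr (Sum.inr _) => (inferInstance : MeasurableSpace (ℝ × ℝ))

/-- The joint family made of the two indicator families and the Gaussian-pair family. -/
def mixedFam {Ω : Type*} {α β γ : Type*} (f : α → Ω → ℝ) (g : β → Ω → ℝ)
    (h : γ → Ω → ℝ × ℝ) : ∀ x : α ⊕ β ⊕ γ, Ω → mixedCod α β γ x
  | Sum.inl s => f s
  | Sum.inr (Sum.inl s) => g s
  | Sum.inr (Sum.inr s) => h s

section AuxGauss

open Real
open scoped NNReal ENNReal

private lemma myInt (b : ℝ) (hb : 0 < b) (n : ℕ) :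
    Integrable (fun x : ℝ => x ^ n * Real.exp (-b * x ^ 2)) := by
  have := integrable_rpow_mul_exp_neg_mul_sq hb (s := n)
    (by exact_mod_cast neg_one_lt_zero.trans_le (Nat.cast_nonneg n))
  simpa [Real.rpow_natCast] using this

private lemma myRec (b : ℝ) (hb : 0 < b) (n : ℕ) :
    ∫ x : ℝ, x ^ (n + 2) * Real.exp (-b * x ^ 2) =
      ((n : ℝ) + 1) / (2 * b) * ∫ x : ℝ, x ^ n * Real.exp (-b * x ^ 2) := by
  have hu : ∀ x : ℝ, HasDerivAt (fun x : ℝ => x ^ (n + 1)) (((n : ℝ) + 1) * x ^ n) x := by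
    intro x
    simpa using hasDerivAt_pow (n + 1) x
  have hv : ∀ x : ℝ, HasDerivAt (fun x : ℝ => -(2 * b)⁻¹ * Real.exp (-b * x ^ 2))
      (x * Real.exp (-b * x ^ 2)) x := by
    intro x
    have h1 : HasDerivAt (fun x : ℝ => -b * x ^ 2) (-b * (2 * x)) x := by
      simpa using ((hasDerivAt_pow 2 x).const_mul (-b))
    have h2 := (h1.exp).const_mul (-(2 * b)⁻¹)
    refine h2.congr_deriv ?_
    field_simp
  have i1 : Integrable ((fun x : ℝ => x ^ (n + 1)) * fun x : ℝ => x * Real.exp (-b * x ^ 2)) :=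
    (myInt b hb (n + 2)).congr (ae_of_all _ fun x => by simp [Pi.mul_apply]; ring)
  have i2 : Integrable ((fun x : ℝ => ((n : ℝ) + 1) * x ^ n) *
      fun x : ℝ => -(2 * b)⁻¹ * Real.exp (-b * x ^ 2)) :=
    ((myInt b hb n).const_mul (((n : ℝ) + 1) * (-(2 * b)⁻¹))).congr
      (ae_of_all _ fun x => by simp [Pi.mul_apply]; ring)
  have i3 : Integrable ((fun x : ℝ => x ^ (n + 1)) *
      fun x : ℝ => -(2 * b)⁻¹ * Real.exp (-b * x ^ 2)) :=
    ((myInt b hb (n + 1)).const_mul (-(2 * b)⁻¹)).congr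
      (ae_of_all _ fun x => by simp [Pi.mul_apply]; ring)
  have key := integral_mul_deriv_eq_deriv_mul_of_integrable (fun x _ => hu x) (fun x _ => hv x) i1 i2 i3
  have e1 : ∫ x : ℝ, x ^ (n + 1) * (x * Real.exp (-b * x ^ 2)) =
      ∫ x : ℝ, x ^ (n + 2) * Real.exp (-b * x ^ 2) := by
    congr 1; funext x; ring
  rw [e1] at key
  rw [key, ← integral_neg, ← integral_const_mul]
  congr 1; funext x
  field_simp

private lemma gauss_density_eq (v : ℝ≥0) (hv : v ≠ 0) :
    gaussianReal 0 v = volume.withDensity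
      (fun x => ((gaussianPDFReal 0 v x).toNNReal : ℝ≥0∞)) := by
  rw [gaussianReal_of_var_ne_zero 0 hv]
  rfl

private lemma gauss_pdf_eq (v : ℝ≥0) (x : ℝ) :
    gaussianPDFReal 0 v x = (Real.sqrt (2 * Real.pi * v))⁻¹ *
      Real.exp (-(2 * (v : ℝ))⁻¹ * x ^ 2) := by
  rw [gaussianPDFReal]
  congr 1
  rw [Real.exp_eq_exp]
  field_simp
  ring

private lemma gauss_integral_eq (v : ℝ≥0) (hv : v ≠ 0) (g : ℝ → ℝ) :
    ∫ x, g x ∂(gaussianReal 0 v) = ∫ x, gaussianPDFReal 0 v x * g x := by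
  rw [gauss_density_eq v hv,
    integral_withDensity_eq_integral_smul (measurable_gaussianPDFReal 0 v).real_toNNReal]
  congr 1
  funext x
  simp [NNReal.smul_def, Real.coe_toNNReal _ (gaussianPDFReal_nonneg 0 v x)]

private lemma gauss_pow_integrable (v : ℝ≥0) (n : ℕ) :
    Integrable (fun x : ℝ => x ^ n) (gaussianReal 0 v) := by
  by_cases hv : v = 0
  · simp only [hv, gaussianReal_zero_var]
    constructor
    · exact (measurable_id.pow_const n).aestronglyMeasurable
    · rw [HasFiniteIntegral, lintegral_dirac]
      exact ENNReal.coe_lt_top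
  · have hb : (0 : ℝ) < (2 * (v : ℝ))⁻¹ := by
      have : (0 : ℝ) < v := lt_of_le_of_ne (v.coe_nonneg) (by exact_mod_cast Ne.symm hv)
      positivity
    rw [gauss_density_eq v hv,
      integrable_withDensity_iff_integrable_smul (measurable_gaussianPDFReal 0 v).real_toNNReal]
    have := ((myInt _ hb n).const_mul (Real.sqrt (2 * Real.pi * v))⁻¹)
    apply this.congr
    refine ae_of_all _ fun x => ?_
    simp only [NNReal.smul_def, Real.coe_toNNReal _ (gaussianPDFReal_nonneg 0 v x), smul_eq_mul]
    rw [gauss_pdf_eq]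
    ring

private lemma gauss_moment_two (v : ℝ≥0) : ∫ x, x ^ 2 ∂(gaussianReal 0 v) = v := by
  by_cases hv : v = 0
  · simp [hv, gaussianReal_zero_var]
  · have hvpos : (0 : ℝ) < v := lt_of_le_of_ne (v.coe_nonneg) (by exact_mod_cast Ne.symm hv)
    have hb : (0 : ℝ) < (2 * (v : ℝ))⁻¹ := by positivity
    set b : ℝ := (2 * (v : ℝ))⁻¹ with hbdef
    rw [gauss_integral_eq v hv]
    have e : ∫ x, gaussianPDFReal 0 v x * x ^ 2 =
        (Real.sqrt (2 * Real.pi * v))⁻¹ * ∫ x : ℝ, x ^ 2 * Real.exp (-b * x ^ 2) := by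
      rw [← integral_const_mul]
      congr 1; funext x; rw [gauss_pdf_eq]; ring
    rw [e, show (2 : ℕ) = 0 + 2 from rfl, myRec b hb 0]
    simp only [Nat.cast_zero, zero_add, pow_zero]
    have : ∫ x : ℝ, (1 : ℝ) * Real.exp (-b * x ^ 2) = Real.sqrt (Real.pi / b) := by
      simp only [one_mul]
      exact integral_gaussian b
    rw [this]
    have h2b : 2 * b = (v : ℝ)⁻¹ := by rw [hbdef]; field_simp
    have hπ : Real.pi / b = 2 * Real.pi * v := by rw [hbdef]; field_simp
    rw [h2b, hπ, one_div, inv_inv]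
    have hA : Real.sqrt (2 * Real.pi * v) ≠ 0 := by positivity
    field_simp

private lemma gauss_moment_four (v : ℝ≥0) : ∫ x, x ^ 4 ∂(gaussianReal 0 v) = 3 * (v : ℝ) ^ 2 := by
  by_cases hv : v = 0
  · simp [hv, gaussianReal_zero_var]
  · have hvpos : (0 : ℝ) < v := lt_of_le_of_ne (v.coe_nonneg) (by exact_mod_cast Ne.symm hv)
    have hb : (0 : ℝ) < (2 * (v : ℝ))⁻¹ := by positivity
    set b : ℝ := (2 * (v : ℝ))⁻¹ with hbdef
    have h2b : ((2:ℝ) + 1) / (2 * b) = 3 * (v : ℝ) := by rw [hbdef]; field_simp; ring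
    have e4 : ∫ x, gaussianPDFReal 0 v x * x ^ 4 =
        (Real.sqrt (2 * Real.pi * v))⁻¹ * ∫ x : ℝ, x ^ 4 * Real.exp (-b * x ^ 2) := by
      rw [← integral_const_mul]; congr 1; funext x; rw [gauss_pdf_eq]; ring
    have e2 : ∫ x, gaussianPDFReal 0 v x * x ^ 2 =
        (Real.sqrt (2 * Real.pi * v))⁻¹ * ∫ x : ℝ, x ^ 2 * Real.exp (-b * x ^ 2) := by
      rw [← integral_const_mul]; congr 1; funext x; rw [gauss_pdf_eq]; ring
    have h2 : ∫ x, x ^ 2 ∂(gaussianReal 0 v) = v := gauss_moment_two v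
    rw [gauss_integral_eq v hv] at h2 ⊢
    rw [e4, show (4 : ℕ) = 2 + 2 from rfl, myRec b hb 2]
    rw [e2] at h2
    push_cast
    rw [h2b, mul_comm (3 * (v:ℝ)) _, ← mul_assoc, h2]
    ring

end AuxGauss

section AuxPair

open scoped NNReal
variable {ν : Measure (ℝ × ℝ)} {a b c : ℝ}

private lemma q_nonneg (ha : 0 < a) (hb : 0 < b) (hc : c ^ 2 ≤ a * b) (t u : ℝ) :
    0 ≤ t ^ 2 * a + 2 * t * u * c + u ^ 2 * b := by
  nlinarith [sq_nonneg (t * a + u * c), mul_nonneg (sq_nonneg u) (sub_nonneg.2 hc), ha.le]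

private lemma comb_integrable (hν : IsCenteredGaussianPair ν a b c) (t u : ℝ) (n : ℕ) :
    Integrable (fun p : ℝ × ℝ => (t * p.1 + u * p.2) ^ n) ν := by
  have hL : Measurable fun p : ℝ × ℝ => t * p.1 + u * p.2 := by fun_prop
  have h := gauss_pow_integrable (Real.toNNReal (t ^ 2 * a + 2 * t * u * c + u ^ 2 * b)) n
  rw [← hν.2 t u] at h
  exact (integrable_map_measure ((by fun_prop : Measurable fun x : ℝ => x ^ n).aestronglyMeasurable) hL.aemeasurable).mp h

private lemma comb_integral (hν : IsCenteredGaussianPair ν a b c) (t u : ℝ) (n : ℕ) :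
    ∫ p, (t * p.1 + u * p.2) ^ n ∂ν =
      ∫ x, x ^ n ∂(gaussianReal 0
        (Real.toNNReal (t ^ 2 * a + 2 * t * u * c + u ^ 2 * b))) := by
  have hL : Measurable fun p : ℝ × ℝ => t * p.1 + u * p.2 := by fun_prop
  rw [← hν.2 t u, integral_map hL.aemeasurable ((by fun_prop : Measurable fun x : ℝ => x ^ n).aestronglyMeasurable)]

private lemma comb_sq_integral (hν : IsCenteredGaussianPair ν a b c)
    (ha : 0 < a) (hb : 0 < b) (hc : c ^ 2 ≤ a * b) (t u : ℝ) :
    ∫ p, (t * p.1 + u * p.2) ^ 2 ∂ν = t ^ 2 * a + 2 * t * u * c + u ^ 2 * b := by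
  rw [comb_integral hν t u 2, gauss_moment_two,
    Real.coe_toNNReal _ (q_nonneg ha hb hc t u)]

private lemma comb_four_integral (hν : IsCenteredGaussianPair ν a b c)
    (ha : 0 < a) (hb : 0 < b) (hc : c ^ 2 ≤ a * b) (t u : ℝ) :
    ∫ p, (t * p.1 + u * p.2) ^ 4 ∂ν = 3 * (t ^ 2 * a + 2 * t * u * c + u ^ 2 * b) ^ 2 := by
  rw [comb_integral hν t u 4, gauss_moment_four,
    Real.coe_toNNReal _ (q_nonneg ha hb hc t u)]

private lemma XY_integrable (hν : IsCenteredGaussianPair ν a b c) :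
    Integrable (fun p : ℝ × ℝ => p.1 * p.2) ν := by
  have h11 := comb_integrable hν 1 1 2
  have h10 := comb_integrable hν 1 0 2
  have h01 := comb_integrable hν 0 1 2
  have := (((h11.sub h10).sub h01).div_const 2)
  apply this.congr
  refine ae_of_all _ fun p => ?_
  simp only [Pi.sub_apply]
  ring

private lemma XY_integral (hν : IsCenteredGaussianPair ν a b c)
    (ha : 0 < a) (hb : 0 < b) (hc : c ^ 2 ≤ a * b) :
    ∫ p, p.1 * p.2 ∂ν = c := by
  have h11 := comb_integrable hν (a := a) (b := b) (c := c) 1 1 2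
  have h10 := comb_integrable hν (a := a) (b := b) (c := c) 1 0 2
  have h01 := comb_integrable hν (a := a) (b := b) (c := c) 0 1 2
  have e : (fun p : ℝ × ℝ => p.1 * p.2) =
      fun p : ℝ × ℝ => (((1 : ℝ) * p.1 + 1 * p.2) ^ 2 - (1 * p.1 + 0 * p.2) ^ 2
        - (0 * p.1 + 1 * p.2) ^ 2) / 2 := by
    funext p; ring
  have h110 : Integrable (fun p : ℝ × ℝ =>
      ((1 : ℝ) * p.1 + 1 * p.2) ^ 2 - (1 * p.1 + 0 * p.2) ^ 2) ν := h11.sub h10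
  rw [e, integral_div, integral_sub h110 h01, integral_sub h11 h10,
    comb_sq_integral hν ha hb hc, comb_sq_integral hν ha hb hc, comb_sq_integral hν ha hb hc]
  ring

private lemma XXYY_integrable (hν : IsCenteredGaussianPair ν a b c) :
    Integrable (fun p : ℝ × ℝ => p.1 ^ 2 * p.2 ^ 2) ν := by
  have h11 := comb_integrable hν 1 1 4
  have h1m := comb_integrable hν 1 (-1) 4
  have h10 := comb_integrable hν 1 0 4
  have h01 := comb_integrable hν 0 1 4
  have := ((((h11.add h1m).sub (h10.const_mul 2)).sub (h01.const_mul 2)).div_const 12)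
  apply this.congr
  refine ae_of_all _ fun p => ?_
  simp only [Pi.sub_apply, Pi.add_apply]
  ring

private lemma XXYY_integral (hν : IsCenteredGaussianPair ν a b c)
    (ha : 0 < a) (hb : 0 < b) (hc : c ^ 2 ≤ a * b) :
    ∫ p, p.1 ^ 2 * p.2 ^ 2 ∂ν = a * b + 2 * c ^ 2 := by
  have h11 := comb_integrable hν (a := a) (b := b) (c := c) 1 1 4
  have h1m := comb_integrable hν (a := a) (b := b) (c := c) 1 (-1) 4
  have h10 := comb_integrable hν (a := a) (b := b) (c := c) 1 0 4
  have h01 := comb_integrable hν (a := a) (b := b) (c := c) 0 1 4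
  have e : (fun p : ℝ × ℝ => p.1 ^ 2 * p.2 ^ 2) =
      fun p : ℝ × ℝ => (((1 : ℝ) * p.1 + 1 * p.2) ^ 4 + (1 * p.1 + (-1) * p.2) ^ 4
        - 2 * (1 * p.1 + 0 * p.2) ^ 4 - 2 * (0 * p.1 + 1 * p.2) ^ 4) / 12 := by
    funext p; ring
  have hA : Integrable (fun p : ℝ × ℝ =>
      ((1 : ℝ) * p.1 + 1 * p.2) ^ 4 + (1 * p.1 + (-1) * p.2) ^ 4) ν := h11.add h1m
  have hB : Integrable (fun p : ℝ × ℝ =>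
      ((1 : ℝ) * p.1 + 1 * p.2) ^ 4 + (1 * p.1 + (-1) * p.2) ^ 4
        - 2 * (1 * p.1 + 0 * p.2) ^ 4) ν := hA.sub (h10.const_mul 2)
  rw [e, integral_div, integral_sub hB (h01.const_mul 2),
    integral_sub hA (h10.const_mul 2), integral_add h11 h1m,
    integral_const_mul 2, integral_const_mul 2,
    comb_four_integral hν ha hb hc, comb_four_integral hν ha hb hc,
    comb_four_integral hν ha hb hc, comb_four_integral hν ha hb hc]
  ring

end AuxPair

set_option maxHeartbeats 2000000 in
/-- Proposition 2 (lower bound on the variance of the bias-corrected off-diagonal Gram entry). -/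
theorem bias_corrected_gram_offdiag_var_lower_bound
    {Ω : Type*} [MeasurableSpace Ω] (μ : Measure Ω) [IsProbabilityMeasure μ]
    (Kii Kjj Kij : ℝ) (hKii : 0 < Kii) (hKjj : 0 < Kjj) (hKpsd : Kij ^ 2 ≤ Kii * Kjj)
    (D : ℕ) (hD : 1 ≤ D)
    (pi pj : Fin D → ℝ)
    (hpi : ∀ s, 0 < pi s ∧ pi s ≤ 1) (hpj : ∀ s, 0 < pj s ∧ pj s ≤ 1)
    (Yt : Fin D → Ω → ℝ × ℝ) (hYt : ∀ s, Measurable (Yt s))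
    (hYtlaw : ∀ s, IsCenteredGaussianPair (μ.map (Yt s)) Kii Kjj Kij)
    (Hi Hj : Fin D → Ω → ℝ) (hHi : ∀ s, Measurable (Hi s)) (hHj : ∀ s, Measurable (Hj s))
    (hHi01 : ∀ s ω, Hi s ω = 0 ∨ Hi s ω = 1) (hHj01 : ∀ s ω, Hj s ω = 0 ∨ Hj s ω = 1)
    (hHiP : ∀ s, μ {ω | Hi s ω = 1} = ENNReal.ofReal (pi s))
    (hHjP : ∀ s, μ {ω | Hj s ω = 1} = ENNReal.ofReal (pj s))
    (hindep : iIndepFun (m := mixedMS) (mixedFam Hi Hj Yt) μ)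
    (Yi Yj : Fin D → Ω → ℝ)
    (hYi : Yi = fun s ω => Hi s ω * (Yt s ω).1) (hYj : Yj = fun s ω => Hj s ω * (Yt s ω).2)
    (G Gtilde : Ω → ℝ)
    (hG : G = fun ω => ∑ s, Yi s ω * Yj s ω)
    (hGt : Gtilde = fun ω => G ω / ∑ s, pi s * pj s)
    (pbar : ℝ) (hpbar : pbar = (∑ s, pi s * pj s) / D) :
    (Kii * Kjj + Kij ^ 2) / (D * pbar) ≤ ∫ ω, Gtilde ω ^ 2 ∂μ - (∫ ω, Gtilde ω ∂μ) ^ 2 := by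
  classical
  letI : ∀ x : Fin D ⊕ Fin D ⊕ Fin D,
      MeasurableSpace (mixedCod (Fin D) (Fin D) (Fin D) x) := mixedMS
  set P : ℝ := ∑ s, pi s * pj s with hP_def
  have hPpos : 0 < P := by
    apply Finset.sum_pos
    · intro s _
      exact mul_pos (hpi s).1 (hpj s).1
    · exact univ_nonempty_iff.2 (Fin.pos_iff_nonempty.mp hD)
  -- the joint family is measurable
  have hmeas : ∀ i, @Measurable _ _ _ (mixedMS i) (mixedFam Hi Hj Yt i) := by
    rintro (s | s | s)
    · exact hHi s
    · exact hHj s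
    · exact hYt s
  -- canonical per-coordinate summand
  set T : Fin D → Ω → ℝ :=
    fun s ω => Hi s ω * (Hj s ω * ((Yt s ω).1 * (Yt s ω).2)) with hT_def
  -- transfers from the Gaussian-pair laws
  have hmXY : Measurable fun p : ℝ × ℝ => p.1 * p.2 := by fun_prop
  have hmXXYY : Measurable fun p : ℝ × ℝ => p.1 ^ 2 * p.2 ^ 2 := by fun_prop
  have hXYint : ∀ s, Integrable (fun ω => (Yt s ω).1 * (Yt s ω).2) μ := fun s =>
    (integrable_map_measure hmXY.aestronglyMeasurable (hYt s).aemeasurable).mp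
      (XY_integrable (hYtlaw s))
  have hXXYYint : ∀ s, Integrable (fun ω => (Yt s ω).1 ^ 2 * (Yt s ω).2 ^ 2) μ := fun s =>
    (integrable_map_measure hmXXYY.aestronglyMeasurable (hYt s).aemeasurable).mp
      (XXYY_integrable (hYtlaw s))
  have hXYval : ∀ s, ∫ ω, (Yt s ω).1 * (Yt s ω).2 ∂μ = Kij := by
    intro s
    rw [← integral_map (hYt s).aemeasurable hmXY.aestronglyMeasurable]
    exact XY_integral (hYtlaw s) hKii hKjj hKpsd
  have hXXYYval : ∀ s, ∫ ω, (Yt s ω).1 ^ 2 * (Yt s ω).2 ^ 2 ∂μ = Kii * Kjj + 2 * Kij ^ 2 := by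
    intro s
    rw [← integral_map (hYt s).aemeasurable hmXXYY.aestronglyMeasurable]
    exact XXYY_integral (hYtlaw s) hKii hKjj hKpsd
  -- expectations of the indicators
  have EHi : ∀ s, ∫ ω, Hi s ω ∂μ = pi s := by
    intro s
    have hset : MeasurableSet {ω | Hi s ω = 1} := (hHi s) (measurableSet_singleton 1)
    have e : (fun ω => Hi s ω) = Set.indicator {ω | Hi s ω = 1} (fun _ => (1:ℝ)) := by
      funext ω
      rcases hHi01 s ω with h | h <;> simp [Set.indicator_apply, h]
    rw [e, integral_indicator_const (1:ℝ) hset, measureReal_def, hHiP s, smul_eq_mul, mul_one,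
      ENNReal.toReal_ofReal (hpi s).1.le]
  have EHj : ∀ s, ∫ ω, Hj s ω ∂μ = pj s := by
    intro s
    have hset : MeasurableSet {ω | Hj s ω = 1} := (hHj s) (measurableSet_singleton 1)
    have e : (fun ω => Hj s ω) = Set.indicator {ω | Hj s ω = 1} (fun _ => (1:ℝ)) := by
      funext ω
      rcases hHj01 s ω with h | h <;> simp [Set.indicator_apply, h]
    rw [e, integral_indicator_const (1:ℝ) hset, measureReal_def, hHjP s, smul_eq_mul, mul_one,
      ENNReal.toReal_ofReal (hpj s).1.le]
  have hHiint : ∀ s, Integrable (Hi s) μ := by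
    intro s
    refine Integrable.mono' (integrable_const (1:ℝ)) (hHi s).aestronglyMeasurable ?_
    refine ae_of_all _ fun ω => ?_
    rcases hHi01 s ω with h | h <;> simp [h]
  have hHjint : ∀ s, Integrable (Hj s) μ := by
    intro s
    refine Integrable.mono' (integrable_const (1:ℝ)) (hHj s).aestronglyMeasurable ?_
    refine ae_of_all _ fun ω => ?_
    rcases hHj01 s ω with h | h <;> simp [h]
  -- the key independence computation
  have key : ∀ (s : Fin D) (F : ℝ × ℝ → ℝ), Measurable F →
      Integrable (fun ω => F (Yt s ω)) μ →
      ∫ ω, Hi s ω * (Hj s ω * F (Yt s ω)) ∂μ =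
        pi s * (pj s * ∫ ω, F (Yt s ω) ∂μ) := by
    intro s F hF hFint
    have hBmeas : Measurable fun ω => Hj s ω * F (Yt s ω) :=
      (hHj s).mul (hF.comp (hYt s))
    have hBint : Integrable (fun ω => Hj s ω * F (Yt s ω)) μ := by
      refine Integrable.mono' hFint.abs hBmeas.aestronglyMeasurable ?_
      refine ae_of_all _ fun ω => ?_
      rcases hHj01 s ω with h | h <;> simp [h, abs_nonneg]
    have base : IndepFun (fun ω => (Hj s ω, Yt s ω)) (Hi s) μ :=
      hindep.indepFun_prodMk hmeas (Sum.inr (Sum.inl s)) (Sum.inr (Sum.inr s)) (Sum.inl s)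
        (by simp) (by simp)
    have E1 : IndepFun (Hi s) (fun ω => Hj s ω * F (Yt s ω)) μ := by
      have := base.comp (φ := fun q : ℝ × (ℝ × ℝ) => q.1 * F q.2) (ψ := id)
        (measurable_fst.mul (hF.comp measurable_snd)) measurable_id
      exact this.symm
    have E2 : IndepFun (Hj s) (fun ω => F (Yt s ω)) μ := by
      have hne : (Sum.inr (Sum.inl s) : Fin D ⊕ Fin D ⊕ Fin D) ≠ Sum.inr (Sum.inr s) := by simp
      have := hindep.indepFun hne
      exact this.comp measurable_id hF
    have h1 : ∫ ω, Hi s ω * (Hj s ω * F (Yt s ω)) ∂μ =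
        (∫ ω, Hi s ω ∂μ) * ∫ ω, Hj s ω * F (Yt s ω) ∂μ :=
      E1.integral_fun_mul_eq_mul_integral (hHiint s).1 hBint.1
    have h2 : ∫ ω, Hj s ω * F (Yt s ω) ∂μ =
        (∫ ω, Hj s ω ∂μ) * ∫ ω, F (Yt s ω) ∂μ :=
      E2.integral_fun_mul_eq_mul_integral (hHjint s).1 hFint.1
    rw [h1, h2, EHi, EHj]
  -- first and second moments of each summand
  have ET : ∀ s, ∫ ω, T s ω ∂μ = pi s * (pj s * Kij) := by
    intro s
    rw [hT_def]
    rw [key s (fun p => p.1 * p.2) hmXY (hXYint s), hXYval s]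
  have hT2eq : ∀ s, (fun ω => T s ω ^ 2) =
      fun ω => Hi s ω * (Hj s ω * ((Yt s ω).1 ^ 2 * (Yt s ω).2 ^ 2)) := by
    intro s
    funext ω
    rw [hT_def]
    rcases hHi01 s ω with h1 | h1 <;> rcases hHj01 s ω with h2 | h2 <;>
      simp [h1, h2] <;> ring
  have ET2 : ∀ s, ∫ ω, T s ω ^ 2 ∂μ = pi s * (pj s * (Kii * Kjj + 2 * Kij ^ 2)) := by
    intro s
    rw [show (∫ ω, T s ω ^ 2 ∂μ) =
        ∫ ω, Hi s ω * (Hj s ω * ((Yt s ω).1 ^ 2 * (Yt s ω).2 ^ 2)) ∂μ from by rw [← hT2eq s]]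
    rw [key s (fun p => p.1 ^ 2 * p.2 ^ 2) hmXXYY (hXXYYint s), hXXYYval s]
  -- integrability of summands
  have hTmeas : ∀ s, Measurable (T s) := by
    intro s
    rw [hT_def]
    exact (hHi s).mul ((hHj s).mul ((measurable_fst.comp (hYt s)).mul
      (measurable_snd.comp (hYt s))))
  have hTint : ∀ s, Integrable (T s) μ := by
    intro s
    refine Integrable.mono' (hXYint s).abs (hTmeas s).aestronglyMeasurable ?_
    refine ae_of_all _ fun ω => ?_
    rw [hT_def]
    rcases hHi01 s ω with h1 | h1 <;> rcases hHj01 s ω with h2 | h2 <;>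
      simp [h1, h2, abs_nonneg, abs_mul] <;> positivity
  have hT2int : ∀ s, Integrable (fun ω => T s ω ^ 2) μ := by
    intro s
    rw [hT2eq s]
    refine Integrable.mono' (hXXYYint s).abs
      ((hHi s).mul ((hHj s).mul (((measurable_fst.comp (hYt s)).pow_const 2).mul
        ((measurable_snd.comp (hYt s)).pow_const 2)))).aestronglyMeasurable ?_
    refine ae_of_all _ fun ω => ?_
    rcases hHi01 s ω with h1 | h1 <;> rcases hHj01 s ω with h2 | h2 <;>
      simp [h1, h2, abs_nonneg, le_abs_self, abs_mul, abs_pow, sq_abs] <;> positivity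
  -- pairwise independence of summands
  have hindepT : ∀ s t : Fin D, s ≠ t → IndepFun (T s) (T t) μ := by
    intro s t hst
    have hdisj : Disjoint
        ({Sum.inl s, Sum.inr (Sum.inl s), Sum.inr (Sum.inr s)} :
          Finset (Fin D ⊕ Fin D ⊕ Fin D))
        {Sum.inl t, Sum.inr (Sum.inl t), Sum.inr (Sum.inr t)} := by
      rw [Finset.disjoint_left]
      intro x hx hx'
      simp only [Finset.mem_insert, Finset.mem_singleton] at hx hx'
      rcases hx with rfl | rfl | rfl <;> rcases hx' with h | h | h <;> simp_all
    have base := hindep.indepFun_finset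
      {Sum.inl s, Sum.inr (Sum.inl s), Sum.inr (Sum.inr s)}
      {Sum.inl t, Sum.inr (Sum.inl t), Sum.inr (Sum.inr t)} hdisj hmeas
    have m1 : ∀ r : Fin D, (Sum.inl r : Fin D ⊕ Fin D ⊕ Fin D) ∈
        ({Sum.inl r, Sum.inr (Sum.inl r), Sum.inr (Sum.inr r)} :
          Finset (Fin D ⊕ Fin D ⊕ Fin D)) := fun r => by simp
    have m2 : ∀ r : Fin D, (Sum.inr (Sum.inl r) : Fin D ⊕ Fin D ⊕ Fin D) ∈
        ({Sum.inl r, Sum.inr (Sum.inl r), Sum.inr (Sum.inr r)} :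
          Finset (Fin D ⊕ Fin D ⊕ Fin D)) := fun r => by simp
    have m3 : ∀ r : Fin D, (Sum.inr (Sum.inr r) : Fin D ⊕ Fin D ⊕ Fin D) ∈
        ({Sum.inl r, Sum.inr (Sum.inl r), Sum.inr (Sum.inr r)} :
          Finset (Fin D ⊕ Fin D ⊕ Fin D)) := fun r => by simp
    refine base.comp
      (φ := fun v => (show ℝ from v ⟨Sum.inl s, m1 s⟩) *
        ((show ℝ from v ⟨Sum.inr (Sum.inl s), m2 s⟩) *
          ((show ℝ × ℝ from v ⟨Sum.inr (Sum.inr s), m3 s⟩).1 *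
            (show ℝ × ℝ from v ⟨Sum.inr (Sum.inr s), m3 s⟩).2)))
      (ψ := fun v => (show ℝ from v ⟨Sum.inl t, m1 t⟩) *
        ((show ℝ from v ⟨Sum.inr (Sum.inl t), m2 t⟩) *
          ((show ℝ × ℝ from v ⟨Sum.inr (Sum.inr t), m3 t⟩).1 *
            (show ℝ × ℝ from v ⟨Sum.inr (Sum.inr t), m3 t⟩).2)))
      ?_ ?_
    · refine Measurable.mul ?_ (Measurable.mul ?_ (Measurable.mul ?_ ?_))
      exacts [measurable_pi_apply _, measurable_pi_apply _,
        Measurable.fst (measurable_pi_apply _), Measurable.snd (measurable_pi_apply _)]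
    · refine Measurable.mul ?_ (Measurable.mul ?_ (Measurable.mul ?_ ?_))
      exacts [measurable_pi_apply _, measurable_pi_apply _,
        Measurable.fst (measurable_pi_apply _), Measurable.snd (measurable_pi_apply _)]
  -- integrals of cross products
  have hTT_int : ∀ s t : Fin D, Integrable (fun ω => T s ω * T t ω) μ := by
    intro s t
    by_cases h : s = t
    · subst h
      exact (hT2int s).congr (ae_of_all _ fun ω => pow_two (T s ω))
    · exact (hindepT s t h).integrable_mul (hTint s) (hTint t)
  have hTT_val : ∀ s t : Fin D, s ≠ t →
      ∫ ω, T s ω * T t ω ∂μ = (∫ ω, T s ω ∂μ) * ∫ ω, T t ω ∂μ := by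
    intro s t h
    exact (hindepT s t h).integral_fun_mul_eq_mul_integral (hTint s).1 (hTint t).1
  -- rewrite G as a sum of T's
  have hGT : G = fun ω => ∑ s, T s ω := by
    rw [hG, hYi, hYj]
    funext ω
    exact Finset.sum_congr rfl fun s _ => by rw [hT_def]; ring
  -- compute the integrals of G and G^2
  have hEG : ∫ ω, G ω ∂μ = ∑ s, pi s * (pj s * Kij) := by
    rw [hGT, integral_finset_sum univ fun s _ => hTint s]
    exact Finset.sum_congr rfl fun s _ => ET s
  have hEG2 : ∫ ω, G ω ^ 2 ∂μ = ∑ s, ∑ t, ∫ ω, T s ω * T t ω ∂μ := by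
    have e : (fun ω => G ω ^ 2) = fun ω => ∑ s, ∑ t, T s ω * T t ω := by
      rw [hGT]
      funext ω
      rw [sq, Finset.sum_mul_sum]
    rw [e, integral_finset_sum univ fun s _ =>
      integrable_finset_sum univ fun t _ => hTT_int s t]
    exact Finset.sum_congr rfl fun s _ =>
      integral_finset_sum univ fun t _ => hTT_int s t
  -- variance formula
  have hVar : ∫ ω, G ω ^ 2 ∂μ - (∫ ω, G ω ∂μ) ^ 2 =
      ∑ s, (∫ ω, T s ω ^ 2 ∂μ - (∫ ω, T s ω ∂μ) ^ 2) := by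
    rw [hEG2]
    have hEGsq : (∫ ω, G ω ∂μ) ^ 2 = ∑ s, ∑ t, (∫ ω, T s ω ∂μ) * ∫ ω, T t ω ∂μ := by
      have : ∫ ω, G ω ∂μ = ∑ s, ∫ ω, T s ω ∂μ := by
        rw [hGT]
        exact integral_finset_sum univ fun s _ => hTint s
      rw [this, sq, Finset.sum_mul_sum]
    rw [hEGsq, ← Finset.sum_sub_distrib]
    refine Finset.sum_congr rfl fun s _ => ?_
    rw [← Finset.sum_sub_distrib]
    rw [Finset.sum_eq_single_of_mem s (Finset.mem_univ s)]
    · rw [show (∫ ω, T s ω * T s ω ∂μ) = ∫ ω, T s ω ^ 2 ∂μ from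
        integral_congr_ae (ae_of_all _ fun ω => (pow_two (T s ω)).symm), sq]
    · intro t _ hts
      rw [hTT_val s t (fun h => hts h.symm)]
      ring
  -- per-term lower bound
  have hterm : ∀ s : Fin D, pi s * pj s * (Kii * Kjj + Kij ^ 2) ≤
      ∫ ω, T s ω ^ 2 ∂μ - (∫ ω, T s ω ∂μ) ^ 2 := by
    intro s
    rw [ET2 s, ET s]
    have h1 := (hpi s).1
    have h2 := (hpi s).2
    have h3 := (hpj s).1
    have h4 := (hpj s).2
    have h5 : pi s * pj s ≤ 1 := mul_le_one₀ h2 h3.le h4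
    have h6 : 0 ≤ pi s * pj s := (mul_pos h1 h3).le
    nlinarith [mul_le_mul_of_nonneg_right h5 (mul_nonneg h6 (sq_nonneg Kij)),
      mul_nonneg h6 (sq_nonneg Kij)]
  have hVarLB : (Kii * Kjj + Kij ^ 2) * P ≤ ∫ ω, G ω ^ 2 ∂μ - (∫ ω, G ω ∂μ) ^ 2 := by
    rw [hVar, hP_def, Finset.mul_sum]
    exact Finset.sum_le_sum fun s _ => by
      have := hterm s
      nlinarith [this]
  -- conclude
  have hDpos : (0 : ℝ) < D := by exact_mod_cast hD
  have hDP : (D : ℝ) * pbar = P := by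
    rw [hpbar]
    field_simp
  have hGt2 : ∫ ω, Gtilde ω ^ 2 ∂μ = (∫ ω, G ω ^ 2 ∂μ) / P ^ 2 := by
    rw [hGt]
    simp only [div_pow]
    exact integral_div _ _
  have hGt1 : ∫ ω, Gtilde ω ∂μ = (∫ ω, G ω ∂μ) / P := by
    rw [hGt]
    exact integral_div _ _
  rw [hGt2, hGt1, hDP, div_pow]
  rw [div_sub_div_same, div_le_div_iff₀ hPpos (by positivity)]
  have hnn : 0 ≤ Kii * Kjj + Kij ^ 2 := by positivity
  nlinarith [hVarLB, hPpos, mul_le_mul_of_nonneg_right hVarLB hPpos.le]
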